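/- Let 𝔛 be a symmetric association scheme of class d ≥ 2 such that θ*_0, θ*_1, …, θ*_d are mutually distinct. Suppose there exists l ∈ {2, 3, …, d} such that for every i ∈ {1, 2, …, d}, ∏_{j=1, j≠i}^d (θ*_0 − θ*_j)/(θ*_i − θ*_j) = −p_i(l). Then 𝔛 is a Q-polynomial scheme with respect to E_1, i.e., Q-polynomial with respect to some ordering E_0, E_1, E_{i_2}, …, E_{i_d} of its primitive idempotents. -/

import Mathlib

open Matrix BigOperators Finset

/-- A symmetric association scheme of class `d` on a finite vertex set `V`,
bundled together with its adjacency matrices, primitive idempotents,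
eigenmatrices `P`, `Q` and Krein parameters. -/
structure SymmAssocScheme (d : ℕ) (V : Type*) [Fintype V] [DecidableEq V] where
  /-- the relations `R_0, …, R_d` -/
  R : Fin (d + 1) → Set (V × V)
  R_nonempty : ∀ i, (R i).Nonempty
  R_zero : R 0 = {p : V × V | p.1 = p.2}
  R_cover : ∀ p : V × V, ∃ i, p ∈ R i
  R_disjoint : ∀ i j, i ≠ j → R i ∩ R j = ∅
  R_symm : ∀ i, ∀ x y : V, (x, y) ∈ R i → (y, x) ∈ R i
  /-- the intersection numbers `p_{ij}^k` -/
  pnum : Fin (d + 1) → Fin (d + 1) → Fin (d + 1) → ℕ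
  pnum_spec : ∀ i j k, ∀ x y : V, (x, y) ∈ R k →
    pnum i j k = {z : V | (x, z) ∈ R i ∧ (z, y) ∈ R j}.ncard
  /-- the adjacency matrices `A_0, …, A_d` -/
  A : Fin (d + 1) → Matrix V V ℂ
  A_of_mem : ∀ i, ∀ x y : V, (x, y) ∈ R i → A i x y = 1
  A_of_not_mem : ∀ i, ∀ x y : V, (x, y) ∉ R i → A i x y = 0
  /-- the primitive idempotents `E_0, …, E_d` -/
  E : Fin (d + 1) → Matrix V V ℂ
  E_zero : E 0 = (Fintype.card V : ℂ)⁻¹ • Matrix.of (fun _ _ => (1 : ℂ))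
  E_sum : ∑ i, E i = (1 : Matrix V V ℂ)
  E_mul : ∀ i j, E i * E j = if i = j then E i else 0
  E_ne_zero : ∀ i, E i ≠ 0
  /-- the first eigenmatrix: `P i j = p_i(j)` -/
  P : Fin (d + 1) → Fin (d + 1) → ℝ
  /-- the second eigenmatrix: `Q i j = q_i(j)`; in particular `θ*_j = Q 1 j` -/
  Q : Fin (d + 1) → Fin (d + 1) → ℝ
  A_eq : ∀ i, A i = ∑ j, (P i j : ℂ) • E j
  E_eq : ∀ i, E i = (Fintype.card V : ℂ)⁻¹ • ∑ j, (Q i j : ℂ) • A j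
  /-- the Krein parameters `q_{ij}^k` -/
  krein : Fin (d + 1) → Fin (d + 1) → Fin (d + 1) → ℝ
  krein_spec : ∀ i j, Matrix.hadamard (E i) (E j) =
    (Fintype.card V : ℂ)⁻¹ • ∑ k, (krein i j k : ℂ) • E k
  krein_nonneg : ∀ i j k, 0 ≤ krein i j k

namespace SymmAssocScheme

variable {d : ℕ} {V : Type*} [Fintype V] [DecidableEq V]

/-- the `h`-fold Hadamard power `E_1^{∘h}` of `E_1`, with `E_1^{∘0} = J`
the all-ones matrix. -/
noncomputable def hadPowE1 (S : SymmAssocScheme d V) : ℕ → Matrix V V ℂ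
  | 0 => Matrix.of fun _ _ => 1
  | n + 1 => Matrix.hadamard (hadPowE1 S n) (S.E 1)

/-- `N h` is the set of indices `j` such that `E_j` is a component of `E_1^{∘h}`
(i.e. `E_j · E_1^{∘h} ≠ 0`) but not a component of `E_1^{∘l}` for any `l < h`. -/
def N (S : SymmAssocScheme d V) (h : ℕ) : Set (Fin (d + 1)) :=
  {j | S.E j * S.hadPowE1 h ≠ 0 ∧ ∀ l < h, S.E j * S.hadPowE1 l = 0}

/-- `𝔛` is `Q`-polynomial with respect to the ordering `E_{σ 0}, E_{σ 1}, …, E_{σ d}`: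
for each `h` there is a polynomial `v*_h` of degree exactly `h` with
`q_{σ h}(j) = v*_h(q_1(j))` for all `j`. -/
def IsQPolyOrdering (S : SymmAssocScheme d V) (σ : Equiv.Perm (Fin (d + 1))) : Prop :=
  ∀ h : Fin (d + 1), ∃ v : Polynomial ℝ, v.degree = (h : ℕ) ∧
    ∀ j, S.Q (σ h) j = v.eval (S.Q 1 j)

/-- `𝔛` is `Q`-polynomial with respect to `E_1`: it is `Q`-polynomial with respect
to some ordering of the form `E_0, E_1, E_{i_2}, …, E_{i_d}`. -/
def IsQPolyE1 (S : SymmAssocScheme d V) : Prop :=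
  ∃ σ : Equiv.Perm (Fin (d + 1)), σ 0 = 0 ∧ σ 1 = 1 ∧ S.IsQPolyOrdering σ

/-- `𝔛` is `P`-polynomial with respect to the ordering `A_{σ 0}, A_{σ 1}, …, A_{σ d}`. -/
def IsPPolyOrdering (S : SymmAssocScheme d V) (σ : Equiv.Perm (Fin (d + 1))) : Prop :=
  ∀ h : Fin (d + 1), ∃ v : Polynomial ℝ, v.degree = (h : ℕ) ∧
    ∀ j, S.P (σ h) j = v.eval (S.P 1 j)

/-- `𝔛` is `P`-polynomial with respect to `A_1`. -/
def IsPPolyA1 (S : SymmAssocScheme d V) : Prop :=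
  ∃ σ : Equiv.Perm (Fin (d + 1)), σ 0 = 0 ∧ σ 1 = 1 ∧ S.IsPPolyOrdering σ

/-- the ratio `K_i = ∏_{j=1, j≠i}^d (θ*_0 − θ*_j)/(θ*_i − θ*_j)`,
where `θ*_j = q_1(j)`. -/
noncomputable def K (S : SymmAssocScheme d V) (i : Fin (d + 1)) : ℝ :=
  ∏ j ∈ Finset.univ.filter (fun j => j ≠ 0 ∧ j ≠ i),
    (S.Q 1 0 - S.Q 1 j) / (S.Q 1 i - S.Q 1 j)

end SymmAssocScheme

/-!
Write `m_h(k) = ∑ i, θ*_i ^ h p_i(k)`, so that `E_1^{∘h} = |X|^{-h} ∑ k, m_h(k) E_k`. Multiplying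
by `E_1` once more and using the Krein parameters gives `m_{h+1}(k) = ∑ m, m_h(m) q_{m1}^k` with all
terms nonnegative, so the first degree `h` at which `E_k` occurs in `E_1^{∘h}` can only grow by one
step at a time: the set of these first degrees is an initial segment of `ℕ`. As the `θ*_i` are
distinct, every `E_k` occurs by degree `d`. The hypothesis `K_i = -p_i(l)` says that the functional
`v ↦ ∑ i, p_i(l) v(θ*_i)` kills the Lagrange basis on the nodes `θ*_1, …, θ*_d`, hence every
polynomial of degree `< d`, so `E_l` first occurs in degree `d`. The first degree is therefore a
bijection onto `{0, …, d}`, and inverting the triangular system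
`θ*_i ^ h = |X|⁻¹ ∑ k, m_h(k) q_k(i)` writes each `q_k` as a polynomial of exactly that degree in `θ*`.
-/

theorem Matrix.sum_hadamard {ι m n α : Type*} [NonUnitalNonAssocSemiring α] (s : Finset ι)
    (M : ι → Matrix m n α) (N : Matrix m n α) :
    (∑ i ∈ s, M i) ⊙ N = ∑ i ∈ s, M i ⊙ N := by
  ext x y
  simp [Matrix.sum_apply, Finset.sum_mul]

theorem Polynomial.linearMap_apply_eq_zero_of_degree_lt {R M : Type*} [CommRing R] [AddCommGroup M]
    [Module R M] (φ : Polynomial R →ₗ[R] M) {n : ℕ} (hφ : ∀ m < n, φ (Polynomial.X ^ m) = 0)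
    {p : Polynomial R} (hp : p.degree < n) : φ p = 0 := by
  classical
  have hle : Polynomial.degreeLT R n ≤ LinearMap.ker φ := by
    rw [Polynomial.degreeLT_eq_span_X_pow, Submodule.span_le]
    intro q hq
    obtain ⟨m, hm, rfl⟩ := Finset.mem_image.1 hq
    exact hφ m (Finset.mem_range.1 hm)
  exact hle (Polynomial.mem_degreeLT.2 hp)

section Triangular

open Polynomial

variable {ι α : Type*} [Fintype ι]

theorem exists_polynomial_of_pow_eq_sum {x : α → ℝ} {f : ι → α → ℝ} {c : ℕ → ι → ℝ}
    {ord : ι → ℕ} (hord : Function.Injective ord) (hc_lt : ∀ h k, h < ord k → c h k = 0)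
    (hc_ne : ∀ k, c (ord k) k ≠ 0) (hpow : ∀ h a, x a ^ h = ∑ k, c h k * f k a) (k : ι) :
    ∃ v : ℝ[X], v.degree = ord k ∧ ∀ a, f k a = v.eval (x a) := by
  classical
  induction hn : ord k using Nat.strong_induction_on generalizing k with
  | _ n ih =>
  have hlower : ∀ k', ord k' < n → ∃ v : ℝ[X], v.degree = ord k' ∧ ∀ a, f k' a = v.eval (x a) :=
    fun k' hk' => ih _ hk' k' rfl
  choose! v hv_deg hv_eval using hlower
  set B := univ.filter fun k' => ord k' < n
  have hkB : k ∉ B := by simp [B, hn]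
  have hu : (∑ k' ∈ B, c n k' • v k').degree < n := by
    rw [← mem_degreeLT]
    refine Submodule.sum_mem _ fun k' hk' => Submodule.smul_mem _ _ (mem_degreeLT.2 ?_)
    have hk' : ord k' < n := (Finset.mem_filter.1 hk').2
    rw [hv_deg k' hk']
    exact_mod_cast hk'
  have hcn : c n k ≠ 0 := hn ▸ hc_ne k
  refine ⟨(c n k)⁻¹ • (X ^ n - ∑ k' ∈ B, c n k' • v k'), ?_, fun a => ?_⟩
  · rw [smul_eq_C_mul, degree_C_mul (inv_ne_zero hcn),
      degree_sub_eq_left_of_degree_lt (by rwa [degree_X_pow]), degree_X_pow]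
  · have hsplit : x a ^ n = c n k * f k a + ∑ k' ∈ B, c n k' * f k' a := by
      rw [hpow]
      refine (Finset.sum_subset (Finset.subset_univ (insert k B)) fun k' _ hk' => ?_).symm.trans
        (Finset.sum_insert hkB)
      have hne : ord k' ≠ n := fun h => hk' (by simp [hord (h.trans hn.symm)])
      have hlt : n < ord k' := lt_of_le_of_ne (by simp_all [B]) hne.symm
      rw [hc_lt n k' hlt, zero_mul]
    have hB : ∀ k' ∈ B, f k' a = (v k').eval (x a) :=
      fun k' hk' => hv_eval k' (Finset.mem_filter.1 hk').2 a
    simp only [eval_smul, eval_sub, eval_pow, eval_X, eval_finsetSum, smul_eq_mul]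
    rw [hsplit, ← Finset.sum_congr rfl fun k' hk' => by rw [hB k' hk']]
    field_simp
    ring

end Triangular

section FirstNonzero

variable {ι : Type*}

/-- `0` when `h ↦ T h k` vanishes identically. -/
noncomputable def firstNonzero (T : ℕ → ι → ℝ) (k : ι) : ℕ := sInf {h | T h k ≠ 0}

variable {T : ℕ → ι → ℝ} {h : ℕ} {k : ι}

theorem firstNonzero_le (hk : T h k ≠ 0) : firstNonzero T k ≤ h := Nat.sInf_le hk

theorem apply_firstNonzero_ne_zero (hk : T h k ≠ 0) : T (firstNonzero T k) k ≠ 0 :=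
  Nat.sInf_mem (s := {h | T h k ≠ 0}) ⟨h, hk⟩

theorem apply_firstNonzero_ne_zero_of_pos (hk : 0 < firstNonzero T k) :
    T (firstNonzero T k) k ≠ 0 :=
  Nat.sInf_mem (s := {h | T h k ≠ 0}) (Nat.nonempty_of_pos_sInf hk)

theorem eq_zero_of_lt_firstNonzero (hh : h < firstNonzero T k) : T h k = 0 :=
  not_not.1 (Nat.notMem_of_lt_sInf hh)

theorem firstNonzero_eq (hk : T h k ≠ 0) (hlt : ∀ m < h, T m k = 0) : firstNonzero T k = h :=
  (firstNonzero_le hk).antisymm <| not_lt.1 fun h' => apply_firstNonzero_ne_zero hk (hlt _ h')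

theorem exists_firstNonzero_eq_of_succ [Fintype ι] {c : ι → ι → ℝ} (hT : ∀ h k, 0 ≤ T h k)
    (hc : ∀ m k, 0 ≤ c m k) (hrec : ∀ h k, T (h + 1) k = ∑ m, T h m * c m k)
    (hk : firstNonzero T k = h + 1) : ∃ m, firstNonzero T m = h := by
  have hTk : T (h + 1) k ≠ 0 := hk ▸ apply_firstNonzero_ne_zero_of_pos (hk ▸ h.succ_pos)
  rw [hrec] at hTk
  obtain ⟨m, -, hm⟩ := Finset.exists_ne_zero_of_sum_ne_zero hTk
  have hTm : T h m ≠ 0 := left_ne_zero_of_mul hm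
  have hpos : 0 < T (firstNonzero T m) m * c m k :=
    mul_pos ((hT _ _).lt_of_ne' (apply_firstNonzero_ne_zero hTm))
      ((hc m k).lt_of_ne' (right_ne_zero_of_mul hm))
  have hnext : T (firstNonzero T m + 1) k ≠ 0 := by
    rw [hrec]
    refine (hpos.trans_le ?_).ne'
    exact Finset.single_le_sum (f := fun m' => T (firstNonzero T m) m' * c m' k)
      (fun m' _ => mul_nonneg (hT _ _) (hc _ _)) (Finset.mem_univ m)
  have h1 := firstNonzero_le hTm
  have h2 := firstNonzero_le hnext
  exact ⟨m, by omega⟩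

end FirstNonzero

theorem exists_equiv_fin_of_downward_closed {ι : Type*} [Fintype ι] {d : ℕ}
    (hcard : Fintype.card ι = d + 1) (f : ι → ℕ) (hle : ∀ k, f k ≤ d) (htop : ∃ k, f k = d)
    (hstep : ∀ k h, f k = h + 1 → ∃ m, f m = h) : ∃ e : Fin (d + 1) ≃ ι, ∀ t, f (e t) = t := by
  have hdown : ∀ j ≤ d, ∃ k, f k = d - j := by
    intro j
    induction j with
    | zero => simpa using htop
    | succ j ih =>
      intro hj
      obtain ⟨k, hk⟩ := ih (by omega)
      exact hstep k _ (by omega)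
  let F : ι → Fin (d + 1) := fun k => ⟨f k, Nat.lt_succ_of_le (hle k)⟩
  have hF : Function.Surjective F := by
    intro t
    obtain ⟨k, hk⟩ := hdown (d - t) (by omega)
    exact ⟨k, Fin.ext (by simp [F, hk]; omega)⟩
  have hFb : Function.Bijective F :=
    (Fintype.bijective_iff_surjective_and_card F).2 ⟨hF, by simp [hcard]⟩
  exact ⟨(Equiv.ofBijective F hFb).symm, fun t =>
    congrArg Fin.val ((Equiv.ofBijective F hFb).apply_symm_apply t)⟩

namespace SymmAssocScheme

variable {d : ℕ} {V : Type*} [Fintype V] [DecidableEq V]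

theorem card_pos (S : SymmAssocScheme d V) : 0 < Fintype.card V :=
  let ⟨⟨x, _⟩, _⟩ := S.R_nonempty 0
  Fintype.card_pos_iff.2 ⟨x⟩

variable (S : SymmAssocScheme d V)

theorem sum_smul_A_apply (c : Fin (d + 1) → ℂ) {i : Fin (d + 1)} {x y : V}
    (hxy : (x, y) ∈ S.R i) : (∑ j, c j • S.A j) x y = c i := by
  rw [Matrix.sum_apply, Finset.sum_eq_single_of_mem i (Finset.mem_univ i)]
  · simp [S.A_of_mem i x y hxy]
  · intro j _ hji
    have hj : (x, y) ∉ S.R j := fun hj =>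
      Set.eq_empty_iff_forall_notMem.1 (S.R_disjoint j i hji) _ ⟨hj, hxy⟩
    simp [S.A_of_not_mem j x y hj]

theorem hadamard_sum_smul_A (a b : Fin (d + 1) → ℂ) :
    (∑ i, a i • S.A i) ⊙ (∑ i, b i • S.A i) = ∑ i, (a i * b i) • S.A i := by
  ext x y
  obtain ⟨i, hi⟩ := S.R_cover (x, y)
  rw [hadamard_apply, S.sum_smul_A_apply a hi, S.sum_smul_A_apply b hi,
    S.sum_smul_A_apply _ hi]

theorem sum_A : ∑ i, S.A i = Matrix.of fun _ _ => (1 : ℂ) := by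
  ext x y
  obtain ⟨i, hi⟩ := S.R_cover (x, y)
  simpa using S.sum_smul_A_apply 1 hi

theorem A_zero : S.A 0 = 1 := by
  ext x y
  by_cases hxy : x = y
  · simp [hxy, Matrix.one_apply, S.A_of_mem 0 y y (by simp [S.R_zero])]
  · simp [hxy, S.A_of_not_mem 0 x y (by simpa [S.R_zero] using hxy)]

theorem coeff_eq_of_sum_smul_E_eq {c c' : Fin (d + 1) → ℝ}
    (h : ∑ k, (c k : ℂ) • S.E k = ∑ k, (c' k : ℂ) • S.E k) : c = c' := by
  have hproj : ∀ (b : Fin (d + 1) → ℝ) j, S.E j * ∑ k, (b k : ℂ) • S.E k = (b j : ℂ) • S.E j := by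
    intro b j
    simp [Matrix.mul_sum, S.E_mul]
  funext j
  have := congrArg (S.E j * ·) h
  simp only [hproj] at this
  exact_mod_cast smul_left_injective ℂ (S.E_ne_zero j) this

theorem sum_smul_A_eq_sum_smul_E (c : Fin (d + 1) → ℝ) :
    ∑ i, (c i : ℂ) • S.A i = ∑ k, ((∑ i, c i * S.P i k : ℝ) : ℂ) • S.E k := by
  simp_rw [S.A_eq, Finset.smul_sum, smul_smul]
  rw [Finset.sum_comm]
  push_cast
  simp_rw [Finset.sum_smul]

theorem sum_smul_E_eq_sum_smul_A (c : Fin (d + 1) → ℝ) :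
    ∑ k, (c k : ℂ) • S.E k =
      ∑ i, (((Fintype.card V : ℝ)⁻¹ * ∑ k, c k * S.Q k i : ℝ) : ℂ) • S.A i := by
  simp_rw [S.E_eq, Finset.smul_sum, smul_smul]
  rw [Finset.sum_comm]
  push_cast
  simp_rw [Finset.mul_sum, Finset.sum_smul]
  refine Finset.sum_congr rfl fun i _ => Finset.sum_congr rfl fun k _ => by ring_nf

theorem P_zero (k : Fin (d + 1)) : S.P 0 k = 1 := by
  have h : ∑ k, (S.P 0 k : ℂ) • S.E k = ∑ k, ((1 : ℝ) : ℂ) • S.E k := by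
    rw [← S.A_eq, S.A_zero]
    simp [S.E_sum]
  exact congrFun (S.coeff_eq_of_sum_smul_E_eq h) k

/-- Up to the factor `|X| ^ h`, the coefficient of `E_k` in the Hadamard power `E_1^{∘h}`. -/
noncomputable def moment (h : ℕ) (k : Fin (d + 1)) : ℝ :=
  ∑ i, S.Q 1 i ^ h * S.P i k

theorem sum_pow_smul_A_eq (h : ℕ) :
    ∑ i, ((S.Q 1 i ^ h : ℝ) : ℂ) • S.A i = ∑ k, (S.moment h k : ℂ) • S.E k :=
  S.sum_smul_A_eq_sum_smul_E _

theorem Q_one_pow_eq (h : ℕ) (i : Fin (d + 1)) :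
    S.Q 1 i ^ h = ∑ k, (Fintype.card V : ℝ)⁻¹ * S.moment h k * S.Q k i := by
  obtain ⟨⟨x, y⟩, hxy⟩ := S.R_nonempty i
  have h := congrFun (congrFun ((S.sum_pow_smul_A_eq h).trans
    (S.sum_smul_E_eq_sum_smul_A _)) x) y
  rw [S.sum_smul_A_apply _ hxy, S.sum_smul_A_apply _ hxy, Complex.ofReal_inj] at h
  simp_rw [h, Finset.mul_sum, mul_assoc]

theorem sum_Q_one_smul_A : ∑ i, (S.Q 1 i : ℂ) • S.A i = (Fintype.card V : ℂ) • S.E 1 := by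
  have hn : (Fintype.card V : ℂ) ≠ 0 := by exact_mod_cast S.card_pos.ne'
  rw [S.E_eq 1, smul_smul, mul_inv_cancel₀ hn, one_smul]

theorem moment_succ (h : ℕ) (k : Fin (d + 1)) :
    S.moment (h + 1) k = ∑ m, S.moment h m * S.krein m 1 k := by
  have hn : (Fintype.card V : ℂ) ≠ 0 := by exact_mod_cast S.card_pos.ne'
  -- `(|X| E_1)^{∘(h+1)} = (|X| E_1)^{∘h} ⊙ |X| E_1`, expanded in both bases
  have key : ∑ k, (S.moment (h + 1) k : ℂ) • S.E k =
      ∑ k, ((∑ m, S.moment h m * S.krein m 1 k : ℝ) : ℂ) • S.E k := by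
    calc ∑ k, (S.moment (h + 1) k : ℂ) • S.E k
        = (∑ i, ((S.Q 1 i ^ h : ℝ) : ℂ) • S.A i) ⊙ ∑ i, (S.Q 1 i : ℂ) • S.A i := by
          rw [← S.sum_pow_smul_A_eq, S.hadamard_sum_smul_A]
          push_cast [pow_succ]
          rfl
      _ = ∑ m, (S.moment h m : ℂ) • ∑ k, (S.krein m 1 k : ℂ) • S.E k := by
          rw [S.sum_pow_smul_A_eq, S.sum_Q_one_smul_A, Matrix.sum_hadamard]
          refine Finset.sum_congr rfl fun m _ => ?_
          rw [smul_hadamard, hadamard_smul, S.krein_spec, smul_smul, smul_smul, mul_assoc,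
            mul_inv_cancel₀ hn, mul_one]
      _ = _ := by
          simp_rw [Finset.smul_sum, smul_smul]
          rw [Finset.sum_comm]
          push_cast
          simp_rw [Finset.sum_smul]
  exact congrFun (S.coeff_eq_of_sum_smul_E_eq key) k

theorem moment_eq_ite_of_sum_pow_smul_A_eq {h : ℕ} {j : Fin (d + 1)}
    (hW : ∑ i, ((S.Q 1 i ^ h : ℝ) : ℂ) • S.A i = (Fintype.card V : ℂ) • S.E j) (k : Fin (d + 1)) :
    S.moment h k = if k = j then (Fintype.card V : ℝ) else 0 := by
  refine congrFun (S.coeff_eq_of_sum_smul_E_eq (c := S.moment h)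
    (c' := fun k => if k = j then (Fintype.card V : ℝ) else 0) ?_) k
  rw [← S.sum_pow_smul_A_eq, hW]
  simp [apply_ite]

theorem moment_zero (k : Fin (d + 1)) :
    S.moment 0 k = if k = 0 then (Fintype.card V : ℝ) else 0 := by
  refine S.moment_eq_ite_of_sum_pow_smul_A_eq ?_ k
  have hn : (Fintype.card V : ℂ) ≠ 0 := by exact_mod_cast S.card_pos.ne'
  simp [S.sum_A, S.E_zero, smul_smul, mul_inv_cancel₀ hn]

theorem moment_one (k : Fin (d + 1)) :
    S.moment 1 k = if k = 1 then (Fintype.card V : ℝ) else 0 :=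
  S.moment_eq_ite_of_sum_pow_smul_A_eq (by simpa using S.sum_Q_one_smul_A) k

theorem moment_nonneg (h : ℕ) (k : Fin (d + 1)) : 0 ≤ S.moment h k := by
  induction h generalizing k with
  | zero => rw [S.moment_zero]; split_ifs <;> positivity
  | succ h ih =>
    rw [S.moment_succ]
    exact Finset.sum_nonneg fun m _ => mul_nonneg (ih m) (S.krein_nonneg m 1 k)

open Polynomial

noncomputable def momentFunctional (k : Fin (d + 1)) : ℝ[X] →ₗ[ℝ] ℝ :=
  ∑ i, S.P i k • leval (S.Q 1 i)

theorem momentFunctional_apply (k : Fin (d + 1)) (p : ℝ[X]) :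
    S.momentFunctional k p = ∑ i, S.P i k * p.eval (S.Q 1 i) := by
  simp [momentFunctional]

theorem momentFunctional_X_pow (k : Fin (d + 1)) (h : ℕ) :
    S.momentFunctional k (X ^ h) = S.moment h k := by
  simp [momentFunctional_apply, moment, mul_comm]

theorem eval_lagrangeBasis_erase_zero (i : Fin (d + 1)) :
    (Lagrange.basis (univ.erase 0) (S.Q 1) i).eval (S.Q 1 0) = S.K i := by
  rw [Lagrange.basis, eval_prod, K]
  refine Finset.prod_congr (by ext j; simp [and_comm]) fun j _ => ?_
  simp [Lagrange.basisDivisor, div_eq_inv_mul]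

theorem momentFunctional_lagrangeBasis_erase_zero (hθ : Function.Injective (S.Q 1))
    (k : Fin (d + 1)) {i : Fin (d + 1)} (hi : i ≠ 0) :
    S.momentFunctional k (Lagrange.basis (univ.erase 0) (S.Q 1) i) = S.K i + S.P i k := by
  have hi' : i ∈ univ.erase 0 := Finset.mem_erase.2 ⟨hi, Finset.mem_univ i⟩
  rw [momentFunctional_apply, ← Finset.add_sum_erase _ _ (Finset.mem_univ 0),
    Finset.sum_eq_single_of_mem i hi', S.P_zero, one_mul, S.eval_lagrangeBasis_erase_zero,
    Lagrange.eval_basis_self hθ.injOn hi', mul_one]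
  intro j hj hji
  rw [Lagrange.eval_basis_of_ne hji.symm hj, mul_zero]

theorem momentFunctional_eq_zero_of_degree_lt (hθ : Function.Injective (S.Q 1))
    {l : Fin (d + 1)} (hK : ∀ i ≠ 0, S.K i = -S.P i l) {p : ℝ[X]} (hp : p.degree < d) :
    S.momentFunctional l p = 0 := by
  rw [Lagrange.eq_interpolate (f := p) hθ.injOn (s := univ.erase 0) (by simpa using hp),
    Lagrange.interpolate_apply, map_sum]
  refine Finset.sum_eq_zero fun i hi => ?_
  rw [← smul_eq_C_mul, map_smul, S.momentFunctional_lagrangeBasis_erase_zero hθ l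
    (Finset.ne_of_mem_erase hi), hK i (Finset.ne_of_mem_erase hi), neg_add_cancel, smul_zero]

theorem exists_moment_ne_zero (hθ : Function.Injective (S.Q 1)) (k : Fin (d + 1)) :
    ∃ h ≤ d, S.moment h k ≠ 0 := by
  by_contra! hzero
  have hone : S.momentFunctional k (Lagrange.basis univ (S.Q 1) 0) = 1 := by
    rw [momentFunctional_apply, Finset.sum_eq_single_of_mem 0 (Finset.mem_univ 0), S.P_zero,
      Lagrange.eval_basis_self hθ.injOn (Finset.mem_univ 0), one_mul]
    intro j _ hj
    rw [Lagrange.eval_basis_of_ne hj.symm (Finset.mem_univ j), mul_zero]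
  refine one_ne_zero (hone.symm.trans (linearMap_apply_eq_zero_of_degree_lt _ (n := d + 1) ?_ ?_))
  · intro m hm
    rw [momentFunctional_X_pow, hzero m (by omega)]
  · rw [Lagrange.degree_basis hθ.injOn (Finset.mem_univ 0)]
    simp only [card_univ, Fintype.card_fin, add_tsub_cancel_right]
    exact_mod_cast Nat.lt_succ_self d

theorem firstNonzero_moment_le (hθ : Function.Injective (S.Q 1)) (k : Fin (d + 1)) :
    firstNonzero S.moment k ≤ d :=
  let ⟨_, hh, hne⟩ := S.exists_moment_ne_zero hθ k
  (firstNonzero_le hne).trans hh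

theorem moment_firstNonzero_ne_zero (hθ : Function.Injective (S.Q 1)) (k : Fin (d + 1)) :
    S.moment (firstNonzero S.moment k) k ≠ 0 :=
  let ⟨_, _, hne⟩ := S.exists_moment_ne_zero hθ k
  apply_firstNonzero_ne_zero hne

theorem firstNonzero_moment_zero : firstNonzero S.moment 0 = 0 :=
  Nat.le_zero.1 <| firstNonzero_le <| by simp [moment_zero, S.card_pos.ne']

theorem firstNonzero_moment_one (h10 : (1 : Fin (d + 1)) ≠ 0) :
    firstNonzero S.moment 1 = 1 :=
  firstNonzero_eq (by simp [moment_one, S.card_pos.ne']) fun m hm => by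
    simp [Nat.lt_one_iff.1 hm, moment_zero, h10]

theorem firstNonzero_moment_eq_of_K_eq (hθ : Function.Injective (S.Q 1)) {l : Fin (d + 1)}
    (hK : ∀ i ≠ 0, S.K i = -S.P i l) : firstNonzero S.moment l = d := by
  have hlow : ∀ m < d, S.moment m l = 0 := fun m hm => by
    rw [← momentFunctional_X_pow]
    exact S.momentFunctional_eq_zero_of_degree_lt hθ hK (by rw [degree_X_pow]; exact_mod_cast hm)
  obtain ⟨h, hh, hne⟩ := S.exists_moment_ne_zero hθ l
  obtain rfl : h = d := hh.antisymm (not_lt.1 fun hlt => hne (hlow h hlt))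
  exact firstNonzero_eq hne hlow

end SymmAssocScheme

theorem statement2_general {d : ℕ} {V : Type*} [Fintype V] [DecidableEq V]
    (S : SymmAssocScheme d V)
    (hθ : Function.Injective fun j : Fin (d + 1) => S.Q 1 j)
    (h : ∃ l : Fin (d + 1), 2 ≤ (l : ℕ) ∧
      ∀ i : Fin (d + 1), i ≠ 0 →
        (∏ j ∈ Finset.univ.filter (fun j => j ≠ 0 ∧ j ≠ i),
          (S.Q 1 0 - S.Q 1 j) / (S.Q 1 i - S.Q 1 j)) = -S.P i l) :
    S.IsQPolyE1 := by
  obtain ⟨l, hl2, hK⟩ := h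
  have hval_one : ((1 : Fin (d + 1)) : ℕ) = 1 := by
    rw [Fin.val_one', Nat.mod_eq_of_lt (by omega)]
  obtain ⟨e, he⟩ := exists_equiv_fin_of_downward_closed (Fintype.card_fin _)
    (firstNonzero S.moment) (S.firstNonzero_moment_le hθ)
    ⟨l, S.firstNonzero_moment_eq_of_K_eq hθ hK⟩ fun _ _ =>
      exists_firstNonzero_eq_of_succ S.moment_nonneg (fun m k => S.krein_nonneg m 1 k)
        S.moment_succ
  have hord : ∀ k, firstNonzero S.moment k = e.symm k := fun k => by simpa using he (e.symm k)
  have hinj : Function.Injective (firstNonzero S.moment) := fun a b hab =>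
    e.symm.injective (Fin.ext (by rw [← hord, ← hord, hab]))
  refine ⟨e, hinj ?_, hinj ?_, fun t => ?_⟩
  · rw [he, S.firstNonzero_moment_zero, Fin.val_zero]
  · rw [he, S.firstNonzero_moment_one (fun h => by simp [h] at hval_one), hval_one]
  · obtain ⟨v, hv, hv_eval⟩ := exists_polynomial_of_pow_eq_sum hinj
      (c := fun h k => (Fintype.card V : ℝ)⁻¹ * S.moment h k)
      (fun _ _ hh => by rw [eq_zero_of_lt_firstNonzero hh, mul_zero])
      (fun k => mul_ne_zero (by simp [S.card_pos.ne']) (S.moment_firstNonzero_ne_zero hθ k))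
      S.Q_one_pow_eq (e t)
    exact ⟨v, he t ▸ hv, hv_eval⟩

/-- If `𝔛` is a symmetric association scheme of class `d ≥ 2` with
`θ*_0, …, θ*_d` mutually distinct and there exists `l ∈ {2, …, d}` such that
`∏_{j=1,j≠i}^d (θ*_0 − θ*_j)/(θ*_i − θ*_j) = −p_i(l)` for every `i ∈ {1, …, d}`,
then `𝔛` is `Q`-polynomial with respect to `E_1`. -/
theorem statement2 {d : ℕ} {V : Type*} [Fintype V] [DecidableEq V]
    (S : SymmAssocScheme d V) (hd : 2 ≤ d)
    (hθ : Function.Injective fun j : Fin (d + 1) => S.Q 1 j)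
    (h : ∃ l : Fin (d + 1), 2 ≤ (l : ℕ) ∧
      ∀ i : Fin (d + 1), i ≠ 0 →
        (∏ j ∈ Finset.univ.filter (fun j => j ≠ 0 ∧ j ≠ i),
          (S.Q 1 0 - S.Q 1 j) / (S.Q 1 i - S.Q 1 j)) = -S.P i l) :
    S.IsQPolyE1 :=
  statement2_general S hθ h
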